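/- arXiv:1012.3311 — 2 statements merged into one kernel-verified Lean document; each statement's English description precedes it below -/
import Mathlib

section
/- Let n ≥ 2 and t ≥ 2 be integers and let n1 < n2 < ⋯ < nt be integers with n1 ≥ 1, nt ≤ n, and n − ni ≤ ni − n(i−1) for every i with 2 ≤ i ≤ t. Then 2^(t−2) ≤ n − 1. -/
/-- Let `n ≥ 2` and `t ≥ 2` be integers and let
`n₁ < n₂ < ⋯ < n_t` be integers with `n₁ ≥ 1`, `n_t ≤ n`, and
`n − nᵢ ≤ nᵢ − nᵢ₋₁` for every `2 ≤ i ≤ t`.  Then `2^(t−2) ≤ n − 1`. -/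
theorem stack_size_log_bound (n : ℤ) (t : ℕ) (hn : 2 ≤ n) (ht : 2 ≤ t)
    (a : ℕ → ℤ)
    (hmono : ∀ i j : ℕ, 1 ≤ i → i < j → j ≤ t → a i < a j)
    (h1 : 1 ≤ a 1) (hlast : a t ≤ n)
    (hcond : ∀ i : ℕ, 2 ≤ i → i ≤ t → n - a i ≤ a i - a (i - 1)) :
    (2 : ℤ) ^ (t - 2) ≤ n - 1 := by
  have key : ∀ j : ℕ, j ≤ t - 2 → (2 : ℤ) ^ j ≤ n - a (t - 1 - j) := by
    intro j
    induction j with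
    | zero =>
      intro _
      have h1' : a (t - 1) < a t := hmono (t - 1) t (by omega) (by omega) le_rfl
      have h2' : n - a t ≤ a t - a (t - 1) := by
        have := hcond t ht le_rfl
        simpa using this
      simp only [Nat.sub_zero, pow_zero]
      linarith
    | succ j ih =>
      intro hj
      have hij : (2 : ℤ) ^ j ≤ n - a (t - 1 - j) := ih (by omega)
      set i := t - 1 - j with hi
      have hi2 : 2 ≤ i := by omega
      have hit : i ≤ t := by omega
      have hc := hcond i hi2 hit
      have heq : t - 1 - (j + 1) = i - 1 := by omega
      rw [heq]
      have : (2 : ℤ) ^ (j + 1) = 2 * 2 ^ j := by ring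
      rw [this]
      linarith
  have := key (t - 2) le_rfl
  have heq : t - 1 - (t - 2) = 1 := by omega
  rw [heq] at this
  linarith
end

section
/- Let n ≥ 1 and t ≥ 1 be integers and let n1, n2, …, nt be integers with n1 ≥ 1 and n − ni ≤ ni − n(i−1) for every i with 2 ≤ i ≤ t. Then for every 1 ≤ i ≤ t one has 2^(i−1)·(n − ni) ≤ n − 1; equivalently, ni ≥ n − (n−1)/2^(i−1). -/
/-- Let `n ≥ 1` and `t ≥ 1` be integers and let `n₁, …, n_t` be
integers with `n₁ ≥ 1` and `n − nᵢ ≤ nᵢ − nᵢ₋₁` for every `2 ≤ i ≤ t`.  Then for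
every `1 ≤ i ≤ t`, `2^(i−1) · (n − nᵢ) ≤ n − 1`. -/
theorem stack_positions_geometric (n : ℤ) (t : ℕ) (hn : 1 ≤ n) (ht : 1 ≤ t)
    (a : ℕ → ℤ) (h1 : 1 ≤ a 1)
    (hcond : ∀ i : ℕ, 2 ≤ i → i ≤ t → n - a i ≤ a i - a (i - 1)) :
    ∀ i : ℕ, 1 ≤ i → i ≤ t → (2 : ℤ) ^ (i - 1) * (n - a i) ≤ n - 1 := by
  intro i
  induction i with
  | zero => omega
  | succ k ih =>
    intro _ hle
    rcases Nat.eq_zero_or_pos k with hk | hk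
    · subst hk
      simpa using by linarith
    · have hih := ih hk (by omega)
      have hc := hcond (k + 1) (by omega) hle
      simp only [Nat.add_sub_cancel] at hc ⊢
      have h2 : 2 * (n - a (k + 1)) ≤ n - a k := by linarith
      calc (2 : ℤ) ^ k * (n - a (k + 1))
          = 2 ^ (k - 1) * (2 * (n - a (k + 1))) := by
            rw [← mul_assoc, ← pow_succ]
            congr 2
            omega
        _ ≤ 2 ^ (k - 1) * (n - a k) := by
            apply mul_le_mul_of_nonneg_left h2 (by positivity)
        _ ≤ n - 1 := hih
end
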